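/- arXiv:1508.00069 — 3 statements merged into one kernel-verified Lean document; each statement's English description precedes it below -/
import Mathlib

section
/- Let A be a real tensor of order m and dimension n (with m ≥ 2, n ≥ 1). If A is an R₀-tensor, i.e., x = 0 is the unique solution of TCP(A,0), then for every q ∈ ℝⁿ, every s ∈ ℝ and every t > 0, the set Γ(q,s,t) = { x ∈ ℝⁿ : x ≥ 0, q + A x^{m-1} ≥ 0, and xᵀq + t·A x^m ≤ s } is bounded. -/
open Finset

/-- The `i`-th component of `A x^{m-1}` for a real tensor `A` of order `m = k+1`
and dimension `n`. -/
def tmul {n k : ℕ} (A : (Fin (k + 1) → Fin n) → ℝ) (x : Fin n → ℝ) : Fin n → ℝ :=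
  fun i => ∑ f : Fin k → Fin n, A (Fin.cons i f) * ∏ j, x (f j)

/-- `A x^m := xᵀ (A x^{m-1})`. -/
def tpow {n k : ℕ} (A : (Fin (k + 1) → Fin n) → ℝ) (x : Fin n → ℝ) : ℝ :=
  ∑ i, x i * tmul A x i

/-- `x` is a solution of the tensor complementarity problem TCP(A, q). -/
def TCPSol {n k : ℕ} (A : (Fin (k + 1) → Fin n) → ℝ) (q x : Fin n → ℝ) : Prop :=
  (∀ i, 0 ≤ x i) ∧ (∀ i, 0 ≤ q i + tmul A x i) ∧ ∑ i, x i * (q i + tmul A x i) = 0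

/-- `A` is an S-tensor: the system `A x^{m-1} > 0, x > 0` has a solution. -/
def STensor {n k : ℕ} (A : (Fin (k + 1) → Fin n) → ℝ) : Prop :=
  ∃ x : Fin n → ℝ, (∀ i, 0 < x i) ∧ ∀ i, 0 < tmul A x i

/-- `A` is strictly semi-positive. -/
def StrictlySemiPositive {n k : ℕ} (A : (Fin (k + 1) → Fin n) → ℝ) : Prop :=
  ∀ x : Fin n → ℝ, (∀ i, 0 ≤ x i) → x ≠ 0 → ∃ j, 0 < x j ∧ 0 < tmul A x j

/-- `A` is an R₀-tensor: `x = 0` is the unique solution of TCP(A, 0). -/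
def R0Tensor {n k : ℕ} (A : (Fin (k + 1) → Fin n) → ℝ) : Prop :=
  ∀ x : Fin n → ℝ, TCPSol A (fun _ => 0) x ↔ x = 0

/-- `A` is a symmetric tensor: entries invariant under permutations of the indices. -/
def TSymmetric {n k : ℕ} (A : (Fin (k + 1) → Fin n) → ℝ) : Prop :=
  ∀ (σ : Equiv.Perm (Fin (k + 1))) (g : Fin (k + 1) → Fin n), A (g ∘ σ) = A g

/-- The `p`-norm `(∑ |x_i|^p)^{1/p}` of a vector. -/
noncomputable def pnorm {n : ℕ} (p : ℝ) (x : Fin n → ℝ) : ℝ :=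
  (∑ i, |x i| ^ p) ^ (1 / p)

/-- The `∞`-norm `max_i |x_i|` of a vector. -/
noncomputable def inftynorm {n : ℕ} (x : Fin n → ℝ) : ℝ :=
  ⨆ i, |x i|

lemma tmul_smul {n k : ℕ} (A : (Fin (k + 1) → Fin n) → ℝ) (c : ℝ) (x : Fin n → ℝ) (i : Fin n) :
    tmul A (c • x) i = c ^ k * tmul A x i := by
  simp only [tmul, Finset.mul_sum]
  refine Finset.sum_congr rfl fun f _ => ?_
  simp only [Pi.smul_apply, smul_eq_mul, Finset.prod_mul_distrib, Finset.prod_const,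
    Finset.card_univ, Fintype.card_fin]
  ring

lemma tpow_smul {n k : ℕ} (A : (Fin (k + 1) → Fin n) → ℝ) (c : ℝ) (x : Fin n → ℝ) :
    tpow A (c • x) = c ^ (k + 1) * tpow A x := by
  simp only [tpow, Finset.mul_sum]
  refine Finset.sum_congr rfl fun i _ => ?_
  rw [tmul_smul]
  simp only [Pi.smul_apply, smul_eq_mul]
  ring

lemma continuous_tmul {n k : ℕ} (A : (Fin (k + 1) → Fin n) → ℝ) (i : Fin n) :
    Continuous fun x : Fin n → ℝ => tmul A x i := by
  unfold tmul
  exact continuous_finset_sum _ fun f _ => continuous_const.mul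
    (continuous_finset_prod _ fun j _ => continuous_apply _)

lemma continuous_tpow {n k : ℕ} (A : (Fin (k + 1) → Fin n) → ℝ) :
    Continuous fun x : Fin n → ℝ => tpow A x := by
  unfold tpow
  exact continuous_finset_sum _ fun i _ => (continuous_apply i).mul (continuous_tmul A i)

lemma helper_b {c r S Q : ℝ} (hc : 0 < c) (hr : 1 < r) (hS : 0 ≤ S) (hQ : 0 ≤ Q)
    (h : c * r ^ 2 ≤ S + Q * r) : r ≤ (S + Q) / c := by
  rw [le_div_iff₀ hc]
  have hr0 : 0 < r := by linarith
  have h2 : c * r * r ≤ (S + Q) * r := by nlinarith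
  have h3 := le_of_mul_le_mul_right h2 hr0
  linarith

theorem stmt3 {n k : ℕ} (hn : 1 ≤ n) (hk : 1 ≤ k) (A : (Fin (k + 1) → Fin n) → ℝ)
    (hR0 : R0Tensor A) (q : Fin n → ℝ) (s t : ℝ) (ht : 0 < t) :
    Bornology.IsBounded {x : Fin n → ℝ |
      (∀ i, 0 ≤ x i) ∧ (∀ i, 0 ≤ q i + tmul A x i) ∧
        (∑ i, x i * q i) + t * tpow A x ≤ s} := by
  haveI : Nonempty (Fin n) := ⟨⟨0, hn⟩⟩
  -- the compact set K
  set K : Set (Fin n → ℝ) := {y | (∀ i, 0 ≤ y i) ∧ ‖y‖ = 1} with hK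
  have hKmem : ∀ z : Fin n → ℝ, z ∈ K ↔ (∀ i, 0 ≤ z i) ∧ ‖z‖ = 1 := fun z => Iff.rfl
  clear_value K
  have hKclosed : IsClosed K := by
    rw [hK]
    have h1 : IsClosed {y : Fin n → ℝ | ∀ i, 0 ≤ y i} := by
      have : {y : Fin n → ℝ | ∀ i, 0 ≤ y i} = ⋂ i, {y | 0 ≤ y i} := by
        ext y; simp [Set.mem_iInter]
      rw [this]
      exact isClosed_iInter fun i => isClosed_le continuous_const (continuous_apply i)
    have h2 : IsClosed {y : Fin n → ℝ | ‖y‖ = 1} :=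
      isClosed_eq continuous_norm continuous_const
    exact h1.inter h2
  have hKbdd : Bornology.IsBounded K := by
    refine (Metric.isBounded_closedBall (x := (0 : Fin n → ℝ)) (r := 1)).subset ?_
    intro y hy
    rw [hKmem] at hy
    simp [Metric.mem_closedBall, dist_zero_right, hy.2]
  have hKc : IsCompact K := Metric.isCompact_of_isClosed_isBounded hKclosed hKbdd
  have hKne : K.Nonempty := by
    rw [hK]
    refine ⟨fun _ => 1, fun i => zero_le_one, ?_⟩
    rw [pi_norm_const]
    exact norm_one
  -- the function φ, positive on K
  set φ : (Fin n → ℝ) → ℝ :=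
    fun y => max (tpow A y) (∑ i, max (-(tmul A y i)) 0) with hφdef
  have hφeq : ∀ z, φ z = max (tpow A z) (∑ i, max (-(tmul A z i)) 0) := fun z => rfl
  clear_value φ
  have hφcont : Continuous φ := by
    rw [hφdef]
    refine (continuous_tpow A).max (continuous_finset_sum _ fun i _ => ?_)
    exact ((continuous_tmul A i).neg).max continuous_const
  have hφpos : ∀ y ∈ K, 0 < φ y := by
    intro y hy
    by_contra h
    push_neg at h
    rw [hφeq] at h
    rw [hKmem] at hy
    have h1 : tpow A y ≤ 0 := le_trans (le_max_left _ _) h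
    have h2 : ∑ i, max (-(tmul A y i)) 0 ≤ 0 := le_trans (le_max_right _ _) h
    have h3 : ∀ i, 0 ≤ tmul A y i := by
      intro i
      by_contra hi
      push_neg at hi
      have : 0 < ∑ i, max (-(tmul A y i)) 0 := by
        refine Finset.sum_pos' (fun j _ => le_max_right _ _) ⟨i, Finset.mem_univ i, ?_⟩
        exact lt_max_of_lt_left (by linarith)
      linarith
    have hsum : ∑ i, y i * ((fun _ => (0:ℝ)) i + tmul A y i) = 0 := by
      have hle : ∑ i, y i * ((fun _ => (0:ℝ)) i + tmul A y i) ≤ 0 := by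
        simpa [tpow] using h1
      have hge : 0 ≤ ∑ i, y i * ((fun _ => (0:ℝ)) i + tmul A y i) :=
        Finset.sum_nonneg fun i _ => mul_nonneg (hy.1 i) (by simpa using h3 i)
      linarith
    have hy0 : y = 0 := (hR0 y).mp ⟨hy.1, fun i => by simpa using h3 i, hsum⟩
    have hy2 : ‖y‖ = 1 := hy.2
    rw [hy0, norm_zero] at hy2
    exact zero_ne_one hy2
  obtain ⟨y₀, hy₀K, hmin⟩ := hKc.exists_isMinOn hKne hφcont.continuousOn
  set ε : ℝ := φ y₀ with hεdef
  have hε : 0 < ε := hφpos y₀ hy₀K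
  have hεK : ∀ y ∈ K, ε ≤ φ y := fun y hy => hmin hy
  clear_value ε
  clear hεdef hmin hy₀K hφpos
  -- the bound
  have hn1 : (1:ℝ) ≤ (n:ℝ) := by exact_mod_cast hn
  have hnpos : (0:ℝ) < n := by linarith
  set R : ℝ := 1 + n * ‖q‖ / ε + (|s| + n * ‖q‖) / (t * ε) with hR
  clear_value R
  rw [Metric.isBounded_iff_subset_closedBall 0]
  refine ⟨R, fun x hx => ?_⟩
  obtain ⟨hx1, hx2, hx3⟩ := hx
  simp only [Metric.mem_closedBall, dist_zero_right]
  by_contra hxR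
  push_neg at hxR
  set r : ℝ := ‖x‖ with hr
  clear_value r
  have hR1 : (1:ℝ) ≤ R := by
    have ha : 0 ≤ n * ‖q‖ / ε := by positivity
    have hb : 0 ≤ (|s| + n * ‖q‖) / (t * ε) := by positivity
    simp only [hR]; linarith
  have hr1 : 1 < r := lt_of_le_of_lt hR1 hxR
  have hr0 : 0 < r := by linarith
  set y : Fin n → ℝ := r⁻¹ • x with hy
  clear_value y
  have hxy : x = r • y := by
    rw [hy, smul_inv_smul₀ (ne_of_gt hr0)]
  have hyK : y ∈ K := by
    rw [hKmem, hy]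
    constructor
    · intro i
      exact mul_nonneg (inv_nonneg.mpr hr0.le) (hx1 i)
    · rw [norm_smul, Real.norm_eq_abs, abs_inv, abs_of_pos hr0, ← hr]
      field_simp
  have hφy : ε ≤ max (tpow A y) (∑ i, max (-(tmul A y i)) 0) := by
    rw [← hφeq]; exact hεK y hyK
  have habs : ∀ i, |x i| ≤ r := fun i => by
    rw [hr]
    simpa [Real.norm_eq_abs] using norm_le_pi_norm x i
  have hqabs : ∀ i, |q i| ≤ ‖q‖ := fun i => by
    simpa [Real.norm_eq_abs] using norm_le_pi_norm q i
  rcases le_max_iff.mp hφy with hb | ha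
  · -- case b : ε ≤ tpow A y
    have htp : tpow A x = r ^ (k+1) * tpow A y := by rw [hxy, tpow_smul]
    have hrk : r ^ 2 ≤ r ^ (k+1) := pow_le_pow_right₀ hr1.le (by omega)
    have hlow : -(n * ‖q‖ * r) ≤ ∑ i, x i * q i := by
      have hterm : ∀ i ∈ Finset.univ, -(‖q‖ * r) ≤ x i * q i := by
        intro i _
        have h1 : |x i * q i| ≤ r * ‖q‖ := by
          rw [abs_mul]
          exact mul_le_mul (habs i) (hqabs i) (abs_nonneg _) hr0.le
        have h2 := neg_abs_le (x i * q i)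
        linarith
      calc -(n * ‖q‖ * r) = ∑ _i : Fin n, -(‖q‖ * r) := by
            simp [Finset.sum_const, Finset.card_univ]; ring
        _ ≤ ∑ i, x i * q i := Finset.sum_le_sum hterm
    rw [htp] at hx3
    have h2 : ε * r ^ 2 ≤ tpow A y * r ^ (k+1) := by
      have e1 : ε * r ^ 2 ≤ ε * r ^ (k+1) := mul_le_mul_of_nonneg_left hrk hε.le
      have e2 : ε * r ^ (k+1) ≤ tpow A y * r ^ (k+1) :=
        mul_le_mul_of_nonneg_right hb (pow_nonneg hr0.le _)
      linarith
    have h2' : t * (ε * r ^ 2) ≤ t * (tpow A y * r ^ (k+1)) :=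
      mul_le_mul_of_nonneg_left h2 ht.le
    have hkey : t * ε * r ^ 2 ≤ |s| + n * ‖q‖ * r := by
      have h3 : s ≤ |s| := le_abs_self s
      nlinarith [h2', hx3, hlow]
    have hrle : r ≤ (|s| + n * ‖q‖) / (t * ε) :=
      helper_b (by positivity) hr1 (abs_nonneg s) (by positivity) hkey
    have hRge : r ≤ R := by
      have h5 : 0 ≤ n * ‖q‖ / ε := by positivity
      simp only [hR]; linarith
    linarith
  · -- case a : ε ≤ ∑ negparts
    have : ∃ i, ε / n ≤ max (-(tmul A y i)) 0 := by
      by_contra h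
      push_neg at h
      have : ∑ i, max (-(tmul A y i)) 0 < ∑ _i : Fin n, ε / n :=
        Finset.sum_lt_sum_of_nonempty Finset.univ_nonempty fun i _ => h i
      rw [Finset.sum_const, Finset.card_univ, Fintype.card_fin, nsmul_eq_mul] at this
      rw [mul_div_cancel₀ _ (ne_of_gt hnpos)] at this
      linarith
    obtain ⟨i, hi⟩ := this
    have hεn : 0 < ε / n := by positivity
    have hti : tmul A y i ≤ -(ε / n) := by
      rcases max_cases (-(tmul A y i)) 0 with ⟨heq, _⟩ | ⟨heq, _⟩
      · rw [heq] at hi; linarith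
      · rw [heq] at hi; linarith
    have htx : tmul A x i = r ^ k * tmul A y i := by rw [hxy, tmul_smul]
    have hrk : r ≤ r ^ k := by
      calc r = r ^ 1 := (pow_one r).symm
        _ ≤ r ^ k := pow_le_pow_right₀ hr1.le hk
    have h1 : tmul A x i ≤ -(ε / n) * r := by
      rw [htx]
      have e1 : r ^ k * tmul A y i ≤ r ^ k * (-(ε/n)) :=
        mul_le_mul_of_nonneg_left hti (pow_nonneg hr0.le k)
      have e2 : r ^ k * (-(ε/n)) ≤ -(ε/n) * r := by
        have := mul_le_mul_of_nonneg_left hrk hεn.le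
        nlinarith
      linarith
    have h2 : ε / n * r ≤ q i := by
      have := hx2 i
      linarith
    have h3 : q i ≤ ‖q‖ := le_trans (le_abs_self _) (hqabs i)
    have hrle : r ≤ n * ‖q‖ / ε := by
      rw [le_div_iff₀ hε]
      have h4 : ε / n * r ≤ ‖q‖ := le_trans h2 h3
      calc r * ε = n * (ε / n * r) := by field_simp
        _ ≤ n * ‖q‖ := by nlinarith
    have hRge : r ≤ R := by
      have h5 : 0 ≤ (|s| + n * ‖q‖) / (t * ε) := by positivity
      simp only [hR]; linarith
    linarith
end

section
/- Let A be a P-tensor of order m and dimension n (with m ≥ 2, n ≥ 1). Then for every q ∈ ℝⁿ the solution set of the tensor complementarity problem TCP(A,q) is bounded. -/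
open Finset

lemma tmul_cont {n k : ℕ} (A : (Fin (k + 1) → Fin n) → ℝ) (i : Fin n) :
    Continuous fun x => tmul A x i := by
  unfold tmul
  exact continuous_finset_sum _ fun f _ =>
    (continuous_const.mul (continuous_finset_prod _ fun j _ => continuous_apply _))

theorem stmt6 {n k : ℕ} (hn : 1 ≤ n) (hk : 1 ≤ k) (A : (Fin (k + 1) → Fin n) → ℝ)
    (hP : ∀ x : Fin n → ℝ, x ≠ 0 → ∃ i, 0 < x i * tmul A x i) (q : Fin n → ℝ) :
    Bornology.IsBounded {x : Fin n → ℝ | TCPSol A q x} := by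
  haveI : Nonempty (Fin n) := ⟨⟨0, hn⟩⟩
  have hune : (Finset.univ : Finset (Fin n)).Nonempty := Finset.univ_nonempty
  set g : (Fin n → ℝ) → ℝ :=
    fun y => Finset.univ.sup' hune (fun i => y i * tmul A y i) with hgdef
  have hg : Continuous g :=
    Continuous.finset_sup'_apply hune fun i _ => (continuous_apply i).mul (tmul_cont A i)
  have hScomp : IsCompact (Metric.sphere (0 : Fin n → ℝ) 1) := isCompact_sphere 0 1
  have hSne : (Metric.sphere (0 : Fin n → ℝ) 1).Nonempty :=
    NormedSpace.sphere_nonempty.mpr zero_le_one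
  obtain ⟨y0, hy0S, hy0min⟩ := hScomp.exists_isMinOn hSne hg.continuousOn
  have hy0n : ‖y0‖ = 1 := mem_sphere_zero_iff_norm.mp hy0S
  have hy0ne : y0 ≠ 0 := by
    intro h; rw [h, norm_zero] at hy0n; norm_num at hy0n
  obtain ⟨i0, hi0⟩ := hP y0 hy0ne
  have hδ : 0 < g y0 :=
    lt_of_lt_of_le hi0 (Finset.le_sup' (fun i => y0 i * tmul A y0 i) (mem_univ i0))
  set δ := g y0 with hδdef
  set R := max 1 (‖q‖ / δ) with hRdef
  refine (Metric.isBounded_closedBall (x := (0 : Fin n → ℝ)) (r := R)).subset ?_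
  intro x hx
  obtain ⟨hx0, hxq, hxs⟩ := hx
  rw [Metric.mem_closedBall, dist_zero_right]
  by_cases hx00 : x = 0
  · rw [hx00, norm_zero]; exact le_trans zero_le_one (le_max_left _ _)
  set c := ‖x‖ with hcdef
  have hc : 0 < c := norm_pos_iff.mpr hx00
  have hy : c⁻¹ • x ∈ Metric.sphere (0 : Fin n → ℝ) 1 := by
    rw [mem_sphere_zero_iff_norm, norm_smul, norm_inv, norm_norm, ← hcdef]
    field_simp
  have hgy : δ ≤ g (c⁻¹ • x) := hy0min hy
  obtain ⟨i, _, hi⟩ := Finset.exists_mem_eq_sup' hune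
    (fun i => (c⁻¹ • x) i * tmul A (c⁻¹ • x) i)
  have hgi : δ ≤ (c⁻¹ • x) i * tmul A (c⁻¹ • x) i := by
    rw [← hi]; exact hgy
  rw [tmul_smul] at hgi
  simp only [Pi.smul_apply, smul_eq_mul] at hgi
  -- hgi : δ ≤ c⁻¹ * x i * (c⁻¹ ^ k * tmul A x i)
  have h1 : δ * c ^ (k + 1) ≤ x i * tmul A x i := by
    have := mul_le_mul_of_nonneg_right hgi (le_of_lt (pow_pos hc (k + 1)))
    calc δ * c ^ (k + 1) ≤ c⁻¹ * x i * (c⁻¹ ^ k * tmul A x i) * c ^ (k + 1) := this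
      _ = (x i * tmul A x i) * (c⁻¹ * c⁻¹ ^ k * c ^ (k + 1)) := by ring
      _ = x i * tmul A x i := by
          rw [← pow_succ', ← mul_pow, inv_mul_cancel₀ hc.ne', one_pow, mul_one]
  have hterm : x i * (q i + tmul A x i) = 0 :=
    (Finset.sum_eq_zero_iff_of_nonneg
      (fun j _ => mul_nonneg (hx0 j) (hxq j))).mp hxs i (mem_univ i)
  have h2 : x i * tmul A x i ≤ c * ‖q‖ := by
    have hXA : x i * tmul A x i = -(x i * q i) := by nlinarith [hterm]
    have habs : -(x i * q i) ≤ |x i| * |q i| := by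
      calc -(x i * q i) ≤ |x i * q i| := neg_le_abs _
        _ = |x i| * |q i| := abs_mul _ _
    have hb1 : |x i| ≤ c := by
      rw [← Real.norm_eq_abs]; exact norm_le_pi_norm x i
    have hb2 : |q i| ≤ ‖q‖ := by
      rw [← Real.norm_eq_abs]; exact norm_le_pi_norm q i
    calc x i * tmul A x i = -(x i * q i) := hXA
      _ ≤ |x i| * |q i| := habs
      _ ≤ c * ‖q‖ := mul_le_mul hb1 hb2 (abs_nonneg _) hc.le
  have h3 : δ * c ^ k ≤ ‖q‖ := by
    have h12 := h1.trans h2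
    rw [pow_succ] at h12
    have : δ * c ^ k * c ≤ ‖q‖ * c := by nlinarith
    exact le_of_mul_le_mul_right this hc
  have h4 : c ^ k ≤ ‖q‖ / δ := (le_div_iff₀ hδ).mpr (by linarith [mul_comm δ (c ^ k)])
  by_cases hc1 : c ≤ 1
  · exact hc1.trans (le_max_left _ _)
  · push_neg at hc1
    have hck : c ≤ c ^ k := le_self_pow₀ hc1.le (by omega)
    exact (hck.trans h4).trans (le_max_right _ _)
end

section
/- Let A be a strictly semi-positive real tensor of order m and dimension n (with m ≥ 2, n ≥ 1). Then A is an R-tensor, i.e., TCP(A,0) has x = 0 as its unique solution, and TCP(A,e) has x = 0 as its unique solution, where e = (1,1,…,1)ᵀ. -/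
open Finset

lemma tmul_zero {n k : ℕ} (hk : 1 ≤ k) (A : (Fin (k + 1) → Fin n) → ℝ) (i : Fin n) :
    tmul A (0 : Fin n → ℝ) i = 0 := by
  unfold tmul
  apply Finset.sum_eq_zero
  intro f _
  have : ∏ j, (0 : Fin n → ℝ) (f j) = 0 := by
    apply Finset.prod_eq_zero (Finset.mem_univ (⟨0, hk⟩ : Fin k))
    rfl
  rw [this, mul_zero]

lemma key {n k : ℕ} (hk : 1 ≤ k) (A : (Fin (k + 1) → Fin n) → ℝ)
    (hssp : StrictlySemiPositive A) (q : Fin n → ℝ) (hq : ∀ i, 0 ≤ q i)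
    (x : Fin n → ℝ) (hx : TCPSol A q x) : x = 0 := by
  by_contra hne
  obtain ⟨hx0, hpos, hsum⟩ := hx
  obtain ⟨j, hj, hjm⟩ := hssp x hx0 hne
  have hterm : 0 < x j * (q j + tmul A x j) :=
    mul_pos hj (lt_of_lt_of_le hjm (by linarith [hq j]))
  have : 0 < ∑ i, x i * (q i + tmul A x i) := by
    apply Finset.sum_pos' (fun i _ => mul_nonneg (hx0 i) (hpos i)) ⟨j, Finset.mem_univ j, hterm⟩
  linarith

theorem stmt13 {n k : ℕ} (hn : 1 ≤ n) (hk : 1 ≤ k) (A : (Fin (k + 1) → Fin n) → ℝ)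
    (hssp : StrictlySemiPositive A) :
    (∀ x : Fin n → ℝ, TCPSol A (fun _ => 0) x ↔ x = 0) ∧
      (∀ x : Fin n → ℝ, TCPSol A (fun _ => 1) x ↔ x = 0) := by
  constructor <;> intro x <;> constructor
  · exact key hk A hssp _ (fun i => le_refl 0) x
  · rintro rfl
    exact ⟨fun i => le_refl 0, fun i => by simp [tmul_zero hk], by simp⟩
  · exact key hk A hssp _ (fun i => zero_le_one) x
  · rintro rfl
    exact ⟨fun i => le_refl 0, fun i => by simp [tmul_zero hk], by simp⟩
end
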